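/- arXiv:2405.03136 — 3 statements merged into one kernel-verified Lean document; each statement's English description precedes it below -/
import Mathlib

section
/- For every integer K \geq 1 and every real N > 0, the Bit Length Bounding gate count S_K^{blb}(N) = N/3 + \sum_{\kappa=1}^{K-1} N \cdot (2^{2^{\kappa}}(2^{\kappa}+1) - 2)/(2^{2^{\kappa+1}} - 1) satisfies S_K^{blb}(N) < 1.71 N. -/
/-!
With `k = 2 ^ κ`, the `κ`-th summand is at most `(4/3) 2^{-κ} N`: with equality at `κ = 1`, and
for `κ ≥ 2` because `3 k (k + 1) + 1 ≤ 4 · 2 ^ k`. Summing the geometric series, the gate count is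
below `N / 3 + 4 N / 3 = 5 N / 3 < 1.71 N`.
-/

open Finset

lemma three_mul_mul_succ_add_one_le_four_mul_two_pow {n : ℕ} (hn : 4 ≤ n) :
    3 * n * (n + 1) + 1 ≤ 4 * 2 ^ n := by
  induction n, hn using Nat.le_induction with
  | base => norm_num
  | succ n hn ih =>
    have : 4 ≤ 2 ^ n := (Nat.pow_le_pow_right two_pos (by omega : 2 ≤ n)).trans' (by norm_num)
    rw [pow_succ]
    nlinarith

lemma mul_add_one_sub_two_div_sq_sub_one_le {a b : ℝ} (ha : 0 < a) (hb : 4 ≤ b)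
    (h : 3 * a * (a + 1) + 1 ≤ 4 * b) :
    (b * (a + 1) - 2) / (b ^ 2 - 1) ≤ 4 / (3 * a) := by
  rw [div_le_div_iff₀ (by nlinarith) (by positivity)]
  nlinarith

lemma blb_summand_le {κ : ℕ} (hκ : 1 ≤ κ) :
    ((2 : ℝ) ^ 2 ^ κ * (2 ^ κ + 1) - 2) / ((2 : ℝ) ^ 2 ^ (κ + 1) - 1) ≤ 4 / 3 * (1 / 2) ^ κ := by
  obtain rfl | hκ₂ := hκ.eq_or_lt
  · norm_num
  have hpow : 4 ≤ 2 ^ κ := (Nat.pow_le_pow_right two_pos hκ₂).trans' (by norm_num)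
  have hsq : (2 : ℝ) ^ 2 ^ (κ + 1) = ((2 : ℝ) ^ 2 ^ κ) ^ 2 := by
    rw [← pow_mul, pow_succ]
  have key := mul_add_one_sub_two_div_sq_sub_one_le (a := (2 : ℝ) ^ κ) (b := 2 ^ 2 ^ κ)
    (by positivity) (by exact_mod_cast (Nat.pow_le_pow_right two_pos hpow).trans' (by norm_num))
    (by exact_mod_cast three_mul_mul_succ_add_one_le_four_mul_two_pow hpow)
  rw [hsq]
  convert key using 1
  rw [one_div_pow]
  field_simp

lemma sum_Icc_one_half_pow_le_one (M : ℕ) : ∑ κ ∈ Icc 1 M, (1 / 2 : ℝ) ^ κ ≤ 1 := by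
  rw [← Ico_add_one_right_eq_Icc]
  exact (geom_sum_Ico_le_of_lt_one (by norm_num) (by norm_num)).trans_eq (by norm_num)

theorem blb_gate_count_upper_general (K : ℕ) (N : ℝ) (hN : 0 < N) :
    N / 3 + ∑ κ ∈ Finset.Icc 1 (K - 1),
        N * ((2 : ℝ) ^ 2 ^ κ * (2 ^ κ + 1) - 2) / ((2 : ℝ) ^ 2 ^ (κ + 1) - 1)
      < 1.71 * N := by
  have hsum : ∑ κ ∈ Icc 1 (K - 1),
      N * ((2 : ℝ) ^ 2 ^ κ * (2 ^ κ + 1) - 2) / ((2 : ℝ) ^ 2 ^ (κ + 1) - 1)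
      ≤ 4 / 3 * N := by
    calc _ ≤ ∑ κ ∈ Icc 1 (K - 1), N * (4 / 3 * (1 / 2 : ℝ) ^ κ) := by
          refine sum_le_sum fun κ hκ => ?_
          rw [mul_div_assoc]
          exact mul_le_mul_of_nonneg_left (blb_summand_le (mem_Icc.mp hκ).1) hN.le
      _ = 4 / 3 * N * ∑ κ ∈ Icc 1 (K - 1), (1 / 2 : ℝ) ^ κ := by
          rw [mul_sum]; exact sum_congr rfl fun _ _ => by ring
      _ ≤ 4 / 3 * N := mul_le_of_le_one_right (by positivity) (sum_Icc_one_half_pow_le_one _)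
  linarith

/-- Upper bound on the Bit Length Bounding gate count: `S_K^{blb}(N) < 1.71 N`
for every `K ≥ 1` and every real `N > 0`. -/
theorem blb_gate_count_upper (K : ℕ) (hK : 1 ≤ K) (N : ℝ) (hN : 0 < N) :
    N / 3 + ∑ κ ∈ Finset.Icc 1 (K - 1),
        N * ((2 : ℝ) ^ 2 ^ κ * (2 ^ κ + 1) - 2) / ((2 : ℝ) ^ 2 ^ (κ + 1) - 1)
      < 1.71 * N :=
  blb_gate_count_upper_general K N hN
end

section
/- For every integer K \geq 4 and every real N > 0, the Bit Length Bounding gate count S_K^{blb}(N) = N/3 + \sum_{\kappa=1}^{K-1} N \cdot (2^{2^{\kappa}}(2^{\kappa}+1) - 2)/(2^{2^{\kappa+1}} - 1) satisfies S_K^{blb}(N) > 1.29 N. -/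
/-! The summands are nonnegative, so truncating the sum after `κ = 3` (possible since `K ≥ 4`)
only decreases it, and already `1/3 + 2/3 + 78/255 + 2302/65535 ≈ 1.341 > 1.29`. -/

open Finset

noncomputable def crossLayerRatio (κ : ℕ) : ℝ :=
  ((2 : ℝ) ^ 2 ^ κ * (2 ^ κ + 1) - 2) / ((2 : ℝ) ^ 2 ^ (κ + 1) - 1)

lemma two_le_two_pow_two_pow (n : ℕ) : (2 : ℝ) ≤ 2 ^ 2 ^ n :=
  le_self_pow₀ one_le_two (pow_ne_zero n two_ne_zero)

lemma crossLayerRatio_nonneg (κ : ℕ) : 0 ≤ crossLayerRatio κ := by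
  have hnum := two_le_two_pow_two_pow κ
  have hden := two_le_two_pow_two_pow (κ + 1)
  have hpow : (1 : ℝ) ≤ 2 ^ κ := one_le_pow₀ one_le_two
  unfold crossLayerRatio
  apply div_nonneg <;> nlinarith

lemma sum_Icc_one_three_crossLayerRatio :
    ∑ κ ∈ Icc 1 3, crossLayerRatio κ = 2 / 3 + 78 / 255 + 2302 / 65535 := by
  rw [show Icc 1 3 = {1, 2, 3} from rfl]
  norm_num [crossLayerRatio]

lemma sum_Icc_one_three_crossLayerRatio_le {K : ℕ} (hK : 4 ≤ K) :
    ∑ κ ∈ Icc 1 3, crossLayerRatio κ ≤ ∑ κ ∈ Icc 1 (K - 1), crossLayerRatio κ :=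
  sum_le_sum_of_subset_of_nonneg (Icc_subset_Icc_right (by omega))
    fun κ _ _ ↦ crossLayerRatio_nonneg κ

/-- Lower bound on the Bit Length Bounding gate count: `S_K^{blb}(N) > 1.29 N`
for every `K ≥ 4` and every real `N > 0`. -/
theorem blb_gate_count_lower (K : ℕ) (hK : 4 ≤ K) (N : ℝ) (hN : 0 < N) :
    1.29 * N
      < N / 3 + ∑ κ ∈ Finset.Icc 1 (K - 1),
          N * ((2 : ℝ) ^ 2 ^ κ * (2 ^ κ + 1) - 2) / ((2 : ℝ) ^ 2 ^ (κ + 1) - 1) := by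
  have hfactor : ∑ κ ∈ Icc 1 (K - 1),
      N * ((2 : ℝ) ^ 2 ^ κ * (2 ^ κ + 1) - 2) / ((2 : ℝ) ^ 2 ^ (κ + 1) - 1)
        = N * ∑ κ ∈ Icc 1 (K - 1), crossLayerRatio κ := by
    simp only [mul_sum, crossLayerRatio, mul_div_assoc]
  have hsum : 1.29 - 1 / 3 < ∑ κ ∈ Icc 1 (K - 1), crossLayerRatio κ :=
    calc (1.29 : ℝ) - 1 / 3 < 2 / 3 + 78 / 255 + 2302 / 65535 := by norm_num
      _ = ∑ κ ∈ Icc 1 3, crossLayerRatio κ := sum_Icc_one_three_crossLayerRatio.symm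
      _ ≤ ∑ κ ∈ Icc 1 (K - 1), crossLayerRatio κ := sum_Icc_one_three_crossLayerRatio_le hK
  rw [hfactor]
  linarith [mul_lt_mul_of_pos_left hsum hN]
end

section
/- Let N > 255 be a natural number and let K = \lceil \log_2 \log_2 (N+1) \rceil. Then the Bit Length Bounding gate count S_K^{blb}(N) = N/3 + \sum_{\kappa=1}^{K-1} N \cdot (2^{2^{\kappa}}(2^{\kappa}+1) - 2)/(2^{2^{\kappa+1}} - 1), viewed as a real number, satisfies 1.29 N < S_K^{blb}(N) < 1.71 N. -/
/-!
Write `r κ` (`crossLayerRate κ`) for the `κ`-th summand divided by `N`. The first two summands alone give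
`1/3 + r 1 + r 2 = 1/3 + 2/3 + 26/85 > 1.29`, and `K ≥ 4` guarantees they are present.
For the upper bound, `r κ ≤ (2^κ + 1) / 2^2^κ`, which is at most `(4/3) (1/2)^κ` because
`3 k (k + 1) ≤ 4 · 2^k` for `k = 2^κ ≥ 4` (and `r 1 = 2/3` exactly), so the sum is below
`4/3` and the total below `5/3 < 1.71`.
-/

open Finset

noncomputable def crossLayerRate (κ : ℕ) : ℝ :=
  ((2 : ℝ) ^ 2 ^ κ * (2 ^ κ + 1) - 2) / ((2 : ℝ) ^ 2 ^ (κ + 1) - 1)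

lemma crossLayerRate_one : crossLayerRate 1 = 2 / 3 := by
  norm_num [crossLayerRate]

lemma crossLayerRate_two : crossLayerRate 2 = 26 / 85 := by
  norm_num [crossLayerRate]

lemma crossLayerRate_nonneg (κ : ℕ) : 0 ≤ crossLayerRate κ := by
  have hx : (2 : ℝ) ≤ 2 ^ 2 ^ κ := le_self_pow₀ one_le_two (by positivity)
  have hk : (1 : ℝ) ≤ 2 ^ κ := one_le_pow₀ one_le_two
  have hsq : (2 : ℝ) ^ 2 ^ (κ + 1) = (2 ^ 2 ^ κ) ^ 2 := by rw [pow_succ, pow_mul]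
  unfold crossLayerRate
  rw [hsq]
  apply div_nonneg <;> nlinarith

lemma crossLayerRate_le_div (κ : ℕ) : crossLayerRate κ ≤ (2 ^ κ + 1) / 2 ^ 2 ^ κ := by
  set x : ℝ := 2 ^ 2 ^ κ
  have hx : (2 : ℝ) ≤ x := le_self_pow₀ one_le_two (by positivity)
  have hkx : (2 : ℝ) ^ κ ≤ x := pow_le_pow_right₀ one_le_two Nat.lt_two_pow_self.le
  have hsq : (2 : ℝ) ^ 2 ^ (κ + 1) = x ^ 2 := by rw [pow_succ, pow_mul]
  unfold crossLayerRate
  rw [hsq, div_le_div_iff₀ (by nlinarith) (by positivity)]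
  nlinarith

lemma three_mul_mul_succ_le_four_mul_two_pow {k : ℕ} (hk : 4 ≤ k) :
    3 * k * (k + 1) ≤ 4 * 2 ^ k := by
  induction k, hk using Nat.le_induction with
  | base => norm_num
  | succ k hk ih => rw [pow_succ]; nlinarith

lemma crossLayerRate_le_geometric (κ : ℕ) : crossLayerRate κ ≤ 4 / 3 * (1 / 2) ^ κ := by
  match κ with
  | 0 => norm_num [crossLayerRate]
  | 1 => norm_num [crossLayerRate_one]
  | κ + 2 =>
    set k := 2 ^ (κ + 2)
    have hk : 4 ≤ k := by
      calc 4 = 2 ^ 2 := rfl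
        _ ≤ k := Nat.pow_le_pow_right two_pos (by omega)
    have hkey : 3 * (k : ℝ) * (k + 1) ≤ 4 * 2 ^ k := by
      exact_mod_cast three_mul_mul_succ_le_four_mul_two_pow hk
    have hk_cast : (2 : ℝ) ^ (κ + 2) = k := by simp [k]
    calc crossLayerRate (κ + 2) ≤ (k + 1) / 2 ^ k := by
          simpa only [hk_cast] using crossLayerRate_le_div (κ + 2)
      _ ≤ 4 / (3 * k) := by
          rw [div_le_div_iff₀ (by positivity) (by positivity)]
          linarith
      _ = 4 / 3 * (1 / 2) ^ (κ + 2) := by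
          rw [← hk_cast, one_div_pow]; ring

lemma sum_Icc_one_half_pow (m : ℕ) : ∑ κ ∈ Icc 1 m, (1 / 2 : ℝ) ^ κ = 1 - (1 / 2) ^ m := by
  induction m with
  | zero => simp
  | succ m ih =>
    rw [sum_Icc_succ_top (by omega), ih, pow_succ]
    ring

lemma sum_crossLayerRate_lt (m : ℕ) : ∑ κ ∈ Icc 1 m, crossLayerRate κ < 4 / 3 :=
  calc ∑ κ ∈ Icc 1 m, crossLayerRate κ ≤ ∑ κ ∈ Icc 1 m, 4 / 3 * (1 / 2 : ℝ) ^ κ :=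
        sum_le_sum fun κ _ => crossLayerRate_le_geometric κ
    _ = 4 / 3 * (1 - (1 / 2) ^ m) := by rw [← mul_sum, sum_Icc_one_half_pow]
    _ < 4 / 3 := by have : (0 : ℝ) < (1 / 2) ^ m := by positivity
                    linarith

lemma le_sum_crossLayerRate {m : ℕ} (hm : 2 ≤ m) :
    2 / 3 + 26 / 85 ≤ ∑ κ ∈ Icc 1 m, crossLayerRate κ :=
  calc (2 / 3 + 26 / 85 : ℝ) = ∑ κ ∈ Icc 1 2, crossLayerRate κ := by
        rw [show Icc 1 2 = {1, 2} from rfl, sum_pair (by norm_num), crossLayerRate_one,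
          crossLayerRate_two]
    _ ≤ ∑ κ ∈ Icc 1 m, crossLayerRate κ :=
        sum_le_sum_of_subset_of_nonneg (Icc_subset_Icc_right hm)
          fun κ _ _ => crossLayerRate_nonneg κ

lemma four_le_clog_clog {N : ℕ} (hN : 255 < N) : 4 ≤ Nat.clog 2 (Nat.clog 2 (N + 1)) := by
  have h8 : 8 < Nat.clog 2 (N + 1) := (Nat.lt_clog_iff_pow_lt one_lt_two).mpr (by omega)
  exact (Nat.lt_clog_iff_pow_lt one_lt_two).mpr (by norm_num; omega)

/-- For `N > 255` and `K = ⌈log₂ log₂ (N + 1)⌉`, the Bit Length Bounding gate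
count satisfies `1.29 N < S_K^{blb}(N) < 1.71 N`. -/
theorem blb_gate_count_bounds (N : ℕ) (hN : 255 < N)
    (K : ℕ) (hK : K = Nat.clog 2 (Nat.clog 2 (N + 1))) :
    1.29 * (N : ℝ)
        < (N : ℝ) / 3 + ∑ κ ∈ Finset.Icc 1 (K - 1),
            (N : ℝ) * ((2 : ℝ) ^ 2 ^ κ * (2 ^ κ + 1) - 2) / ((2 : ℝ) ^ 2 ^ (κ + 1) - 1) ∧
    (N : ℝ) / 3 + ∑ κ ∈ Finset.Icc 1 (K - 1),
        (N : ℝ) * ((2 : ℝ) ^ 2 ^ κ * (2 ^ κ + 1) - 2) / ((2 : ℝ) ^ 2 ^ (κ + 1) - 1)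
      < 1.71 * (N : ℝ) := by
  have hN_pos : (0 : ℝ) < N := by exact_mod_cast (by omega : 0 < N)
  have hK4 : 4 ≤ K := hK ▸ four_le_clog_clog hN
  simp only [mul_div_assoc, ← mul_sum]
  change _ < _ + N * ∑ κ ∈ Icc 1 (K - 1), crossLayerRate κ ∧
    _ + N * ∑ κ ∈ Icc 1 (K - 1), crossLayerRate κ < _
  have hlower := le_sum_crossLayerRate (m := K - 1) (by omega)
  have hupper := sum_crossLayerRate_lt (K - 1)
  constructor <;> nlinarith
end
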